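/- arXiv:2511.10626 — 8 statements merged into one kernel-verified Lean document; each statement's English description precedes it below -/
import Mathlib

section
/- Let F₂ : X → R be hidden convex via F₂ = H₂ ∘ c with H₂ convex on U = c(X), and let ‖c⁻¹(u) - c⁻¹(v)‖ ≤ (1/μ_c)‖u - v‖ for all u,v ∈ U. Suppose U has diameter D_U, x⁽ᵏ⁾ ∈ X satisfies F₂(x⁽ᵏ⁾) ≤ τ with τ > 0, and x* ∈ X satisfies F₂(x*) ≤ 0. Fix ρ̂ > 0 and let 0 < α ≤ min{1, μ_c²τ/(ρ̂·D_U²)}. Then the point x_α := c⁻¹((1-α)c(x⁽ᵏ⁾) + α c(x*)) satisfies F₂(x_α) + (ρ̂/2)·‖x_α - x⁽ᵏ⁾‖² - τ ≤ -ατ/2 < 0. -/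
open Set

/-- HC–Slater's Lemma, part 1 (no constraint qualification). -/
theorem stmt3 {d : ℕ}
    (X U : Set (EuclideanSpace ℝ (Fin d)))
    (c cinv : EuclideanSpace ℝ (Fin d) → EuclideanSpace ℝ (Fin d))
    (H2 F2 : EuclideanSpace ℝ (Fin d) → ℝ)
    (μc DU τ ρh α : ℝ)
    (hμ : 0 < μc) (hτ : 0 < τ) (hρ : 0 < ρh) (hDUpos : 0 < DU)
    (hU : U = c '' X)
    (hUconv : Convex ℝ U)
    (hinv : ∀ x ∈ X, cinv (c x) = x)
    (hinv' : ∀ u ∈ U, c (cinv u) = u)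
    (hinvmem : ∀ u ∈ U, cinv u ∈ X)
    (hLip : ∀ u ∈ U, ∀ v ∈ U, ‖cinv u - cinv v‖ ≤ (1 / μc) * ‖u - v‖)
    (hH2 : ∀ u ∈ U, ∀ v ∈ U, ∀ t ∈ Icc (0:ℝ) 1,
      H2 ((1 - t) • u + t • v) ≤ (1 - t) * H2 u + t * H2 v)
    (hF2 : ∀ x ∈ X, F2 x = H2 (c x))
    (hDU : ∀ u ∈ U, ∀ v ∈ U, ‖u - v‖ ≤ DU)
    (xk xstar : EuclideanSpace ℝ (Fin d))
    (hxk : xk ∈ X) (hxkfeas : F2 xk ≤ τ)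
    (hxs : xstar ∈ X) (hxsfeas : F2 xstar ≤ 0)
    (hα0 : 0 < α) (hα : α ≤ min 1 (μc ^ 2 * τ / (ρh * DU ^ 2))) :
    F2 (cinv ((1 - α) • c xk + α • c xstar))
      + (ρh / 2) * ‖cinv ((1 - α) • c xk + α • c xstar) - xk‖ ^ 2 - τ
      ≤ -(α * τ) / 2 ∧ -(α * τ) / 2 < 0 := by
  have hα1 : α ≤ 1 := le_trans hα (min_le_left _ _)
  have hα2 : α ≤ μc ^ 2 * τ / (ρh * DU ^ 2) := le_trans hα (min_le_right _ _)
  have huU : c xk ∈ U := hU ▸ ⟨xk, hxk, rfl⟩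
  have hvU : c xstar ∈ U := hU ▸ ⟨xstar, hxs, rfl⟩
  set w : EuclideanSpace ℝ (Fin d) := (1 - α) • c xk + α • c xstar with hw
  have hwU : w ∈ U := hUconv huU hvU (by linarith) (le_of_lt hα0) (by ring)
  have hxαX : cinv w ∈ X := hinvmem w hwU
  -- bound on F2
  have hF2bound : F2 (cinv w) ≤ (1 - α) * τ := by
    rw [hF2 _ hxαX, hinv' w hwU]
    calc H2 w ≤ (1 - α) * H2 (c xk) + α * H2 (c xstar) :=
          hH2 _ huU _ hvU α ⟨le_of_lt hα0, hα1⟩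
      _ = (1 - α) * F2 xk + α * F2 xstar := by rw [hF2 _ hxk, hF2 _ hxs]
      _ ≤ (1 - α) * τ + α * 0 := by
          have h1 : (1 - α) * F2 xk ≤ (1 - α) * τ :=
            mul_le_mul_of_nonneg_left hxkfeas (by linarith)
          have h2 : α * F2 xstar ≤ α * 0 :=
            mul_le_mul_of_nonneg_left hxsfeas (le_of_lt hα0)
          linarith
      _ = (1 - α) * τ := by ring
  -- bound on the distance
  have hdiff : w - c xk = α • (c xstar - c xk) := by
    rw [hw]; module
  have hnorm : ‖cinv w - xk‖ ≤ (α / μc) * DU := by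
    have h1 : ‖cinv w - cinv (c xk)‖ ≤ (1 / μc) * ‖w - c xk‖ :=
      hLip w hwU (c xk) huU
    rw [hinv xk hxk] at h1
    have h2 : ‖w - c xk‖ = α * ‖c xstar - c xk‖ := by
      rw [hdiff, norm_smul, Real.norm_eq_abs, abs_of_pos hα0]
    have h3 : ‖c xstar - c xk‖ ≤ DU := hDU _ hvU _ huU
    calc ‖cinv w - xk‖ ≤ (1 / μc) * (α * ‖c xstar - c xk‖) := by rw [← h2]; exact h1
      _ ≤ (1 / μc) * (α * DU) := by
          apply mul_le_mul_of_nonneg_left _ (by positivity)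
          exact mul_le_mul_of_nonneg_left h3 (le_of_lt hα0)
      _ = (α / μc) * DU := by ring
  have hsq : ‖cinv w - xk‖ ^ 2 ≤ ((α / μc) * DU) ^ 2 := by
    apply sq_le_sq' _ hnorm
    have := norm_nonneg (cinv w - xk)
    nlinarith [mul_pos (div_pos hα0 hμ) hDUpos]
  -- combine
  have hquad : (ρh / 2) * ‖cinv w - xk‖ ^ 2 ≤ α * τ / 2 := by
    have h4 : (ρh / 2) * ((α / μc) * DU) ^ 2 ≤ α * τ / 2 := by
      have hkey : α * (ρh * DU ^ 2) ≤ μc ^ 2 * τ :=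
        (le_div_iff₀ (by positivity : (0:ℝ) < ρh * DU ^ 2)).mp hα2
      have hμ2 : (0:ℝ) < μc ^ 2 := by positivity
      have expand : (ρh / 2) * ((α / μc) * DU) ^ 2 = α * (α * (ρh * DU ^ 2)) / (2 * μc ^ 2) := by
        field_simp
      rw [expand, div_le_iff₀ (by positivity : (0:ℝ) < 2 * μc ^ 2)]
      nlinarith [mul_le_mul_of_nonneg_left hkey (le_of_lt hα0)]
    calc (ρh / 2) * ‖cinv w - xk‖ ^ 2 ≤ (ρh / 2) * ((α / μc) * DU) ^ 2 :=
          mul_le_mul_of_nonneg_left hsq (by positivity)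
      _ ≤ α * τ / 2 := h4
  constructor
  · have := hF2bound
    have := hquad
    nlinarith
  · have : 0 < α * τ := mul_pos hα0 hτ
    linarith
end

section
/- Let F₂ = H₂ ∘ c be hidden convex with U = c(X) convex, H₂ convex, and c⁻¹ Lipschitz with constant 1/μ_c. Suppose U has diameter D_U, x⁽ᵏ⁾ ∈ X satisfies F₂(x⁽ᵏ⁾) ≤ τ with τ > 0, and there exists a Slater point ȳ ∈ X with F₂(ȳ) ≤ -θ for some θ > 0. Fix ρ̂ > 0 and let 0 < β ≤ min{1, μ_c²θ/(ρ̂·D_U²)}. Then ȳ_β := c⁻¹((1-β)c(x⁽ᵏ⁾) + β c(ȳ)) satisfies F₂(ȳ_β) + (ρ̂/2)·‖ȳ_β - x⁽ᵏ⁾‖² - τ ≤ -βθ/2 < 0. -/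
open Set

/-- HC–Slater's Lemma, part 2 (with a Slater point of the
original problem). -/
theorem stmt4 {d : ℕ}
    (X U : Set (EuclideanSpace ℝ (Fin d)))
    (c cinv : EuclideanSpace ℝ (Fin d) → EuclideanSpace ℝ (Fin d))
    (H2 F2 : EuclideanSpace ℝ (Fin d) → ℝ)
    (μc DU τ θ ρh β : ℝ)
    (hμ : 0 < μc) (hτ : 0 < τ) (hθ : 0 < θ) (hρ : 0 < ρh) (hDUpos : 0 < DU)
    (hU : U = c '' X)
    (hUconv : Convex ℝ U)
    (hinv : ∀ x ∈ X, cinv (c x) = x)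
    (hinv' : ∀ u ∈ U, c (cinv u) = u)
    (hinvmem : ∀ u ∈ U, cinv u ∈ X)
    (hLip : ∀ u ∈ U, ∀ v ∈ U, ‖cinv u - cinv v‖ ≤ (1 / μc) * ‖u - v‖)
    (hH2 : ∀ u ∈ U, ∀ v ∈ U, ∀ t ∈ Icc (0:ℝ) 1,
      H2 ((1 - t) • u + t • v) ≤ (1 - t) * H2 u + t * H2 v)
    (hF2 : ∀ x ∈ X, F2 x = H2 (c x))
    (hDU : ∀ u ∈ U, ∀ v ∈ U, ‖u - v‖ ≤ DU)
    (xk ybar : EuclideanSpace ℝ (Fin d))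
    (hxk : xk ∈ X) (hxkfeas : F2 xk ≤ τ)
    (hy : ybar ∈ X) (hySlater : F2 ybar ≤ -θ)
    (hβ0 : 0 < β) (hβ : β ≤ min 1 (μc ^ 2 * θ / (ρh * DU ^ 2))) :
    F2 (cinv ((1 - β) • c xk + β • c ybar))
      + (ρh / 2) * ‖cinv ((1 - β) • c xk + β • c ybar) - xk‖ ^ 2 - τ
      ≤ -(β * θ) / 2 ∧ -(β * θ) / 2 < 0 := by
  have hβ1 : β ≤ 1 := le_trans hβ (min_le_left _ _)
  have hβ2 : β ≤ μc ^ 2 * θ / (ρh * DU ^ 2) := le_trans hβ (min_le_right _ _)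
  have huU : c xk ∈ U := hU ▸ ⟨xk, hxk, rfl⟩
  have hvU : c ybar ∈ U := hU ▸ ⟨ybar, hy, rfl⟩
  set w := (1 - β) • c xk + β • c ybar with hwdef
  have hwU : w ∈ U := hUconv huU hvU (by linarith) hβ0.le (by ring)
  have hwX : cinv w ∈ X := hinvmem w hwU
  have hF2w : F2 (cinv w) = H2 w := by rw [hF2 _ hwX, hinv' w hwU]
  have hH2w : H2 w ≤ (1 - β) * H2 (c xk) + β * H2 (c ybar) :=
    hH2 _ huU _ hvU β ⟨hβ0.le, hβ1⟩
  have hH2u : H2 (c xk) ≤ τ := by rw [← hF2 xk hxk]; exact hxkfeas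
  have hH2v : H2 (c ybar) ≤ -θ := by rw [← hF2 ybar hy]; exact hySlater
  have hnorm : ‖cinv w - xk‖ ≤ β * DU / μc := by
    have h1 : ‖cinv w - cinv (c xk)‖ ≤ (1 / μc) * ‖w - c xk‖ := hLip w hwU _ huU
    have h2 : w - c xk = β • (c ybar - c xk) := by
      simp only [hwdef]; module
    have h3 : ‖w - c xk‖ = β * ‖c ybar - c xk‖ := by
      rw [h2, norm_smul, Real.norm_of_nonneg hβ0.le]
    have h4 : ‖c ybar - c xk‖ ≤ DU := hDU _ hvU _ huU
    calc ‖cinv w - xk‖ = ‖cinv w - cinv (c xk)‖ := by rw [hinv xk hxk]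
      _ ≤ (1 / μc) * ‖w - c xk‖ := h1
      _ = (1 / μc) * (β * ‖c ybar - c xk‖) := by rw [h3]
      _ ≤ (1 / μc) * (β * DU) := by
          apply mul_le_mul_of_nonneg_left _ (by positivity)
          exact mul_le_mul_of_nonneg_left h4 hβ0.le
      _ = β * DU / μc := by ring
  have hnormsq : ‖cinv w - xk‖ ^ 2 ≤ (β * DU / μc) ^ 2 :=
    pow_le_pow_left₀ (norm_nonneg _) hnorm 2
  have hβ2' : β * (ρh * DU ^ 2) ≤ μc ^ 2 * θ := by
    rw [le_div_iff₀ (by positivity)] at hβ2; linarith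
  have hquad : (ρh / 2) * ‖cinv w - xk‖ ^ 2 ≤ β * θ / 2 := by
    have h5 : (ρh / 2) * (β * DU / μc) ^ 2 ≤ β * θ / 2 := by
      have h6 : (ρh / 2) * (β * DU / μc) ^ 2
          = (β / (2 * μc ^ 2)) * (β * (ρh * DU ^ 2)) := by
        field_simp
      have h7 : (β / (2 * μc ^ 2)) * (β * (ρh * DU ^ 2))
          ≤ (β / (2 * μc ^ 2)) * (μc ^ 2 * θ) :=
        mul_le_mul_of_nonneg_left hβ2' (by positivity)
      have h8 : (β / (2 * μc ^ 2)) * (μc ^ 2 * θ) = β * θ / 2 := by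
        field_simp
      linarith
    linarith [mul_le_mul_of_nonneg_left hnormsq (by positivity : (0:ℝ) ≤ ρh / 2)]
  constructor
  · rw [hF2w]
    nlinarith [mul_le_mul_of_nonneg_left hH2u (by linarith : (0:ℝ) ≤ 1 - β)]
  · nlinarith
end

section
/- Let F₁ = H₁ ∘ c and F₂ = H₂ ∘ c be hidden convex with c⁻¹ (1/μ_c)-Lipschitz and U of diameter D_U, and assume F₁ is ρ-weakly convex (x ↦ F₁(x) + (ρ/2)‖x‖² is convex on X), so that the linearization ℓ_{F₁}(x,y) := F₁(y) + ⟨∇F₁(y), x-y⟩ satisfies ℓ_{F₁}(x,y) ≤ F₁(x) + (ρ/2)‖x-y‖². Let x* be a minimizer of F₁ over {x ∈ X : F₂(x) ≤ 0} with value F₁*. Then for any x⁽ᵗ⁾ ∈ X and α ∈ [0,1], the point x_α := c⁻¹((1-α)c(x⁽ᵗ⁾) + α c(x*)) satisfies ℓ_{F₁}(x_α, x⁽ᵗ⁾) ≤ ρα²D_U²/(2μ_c²) + (1-α)F₁(x⁽ᵗ⁾) + α F₁*. -/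
open Set
open scoped RealInnerProductSpace

/-- bound on the linearized objective at the hidden-convex
combination point. -/
theorem stmt7 {d : ℕ}
    (X U : Set (EuclideanSpace ℝ (Fin d)))
    (c cinv : EuclideanSpace ℝ (Fin d) → EuclideanSpace ℝ (Fin d))
    (H1 F1 F2 : EuclideanSpace ℝ (Fin d) → ℝ)
    (g : EuclideanSpace ℝ (Fin d) → EuclideanSpace ℝ (Fin d)) -- g = ∇F₁
    (μc DU ρ F1star : ℝ)
    (hμ : 0 < μc) (hρ : 0 ≤ ρ)
    (hU : U = c '' X)
    (hUconv : Convex ℝ U)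
    (hinv : ∀ x ∈ X, cinv (c x) = x)
    (hinv' : ∀ u ∈ U, c (cinv u) = u)
    (hinvmem : ∀ u ∈ U, cinv u ∈ X)
    (hLip : ∀ u ∈ U, ∀ v ∈ U, ‖cinv u - cinv v‖ ≤ (1 / μc) * ‖u - v‖)
    (hH1 : ∀ u ∈ U, ∀ v ∈ U, ∀ t ∈ Icc (0:ℝ) 1,
      H1 ((1 - t) • u + t • v) ≤ (1 - t) * H1 u + t * H1 v)
    (hF1 : ∀ x ∈ X, F1 x = H1 (c x))
    (hDU : ∀ u ∈ U, ∀ v ∈ U, ‖u - v‖ ≤ DU)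
    -- ρ-weak convexity: the linearization is a lower bound up to a quadratic
    (hwc : ∀ x ∈ X, ∀ y ∈ X, F1 y + ⟪g y, x - y⟫ ≤ F1 x + (ρ / 2) * ‖x - y‖ ^ 2)
    (xstar : EuclideanSpace ℝ (Fin d)) (hxs : xstar ∈ X)
    (hxsfeas : F2 xstar ≤ 0)
    (hmin : ∀ x ∈ X, F2 x ≤ 0 → F1 xstar ≤ F1 x)
    (hstar : F1 xstar = F1star)
    (xt : EuclideanSpace ℝ (Fin d)) (hxt : xt ∈ X)
    (α : ℝ) (hα : α ∈ Icc (0:ℝ) 1) :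
    F1 xt + ⟪g xt, cinv ((1 - α) • c xt + α • c xstar) - xt⟫
      ≤ ρ * α ^ 2 * DU ^ 2 / (2 * μc ^ 2) + (1 - α) * F1 xt + α * F1star := by
  obtain ⟨hα0, hα1⟩ := hα
  have hut : c xt ∈ U := hU ▸ mem_image_of_mem c hxt
  have hus : c xstar ∈ U := hU ▸ mem_image_of_mem c hxs
  set w : EuclideanSpace ℝ (Fin d) := (1 - α) • c xt + α • c xstar with hw
  have hwU : w ∈ U := hUconv hut hus (by linarith) hα0 (by ring)
  set xa : EuclideanSpace ℝ (Fin d) := cinv w with hxa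
  have hxaX : xa ∈ X := hinvmem w hwU
  -- bound ‖xa - xt‖
  have hdist : ‖xa - xt‖ ≤ (1 / μc) * (α * DU) := by
    have h1 : ‖xa - xt‖ ≤ (1 / μc) * ‖w - c xt‖ := by
      have := hLip w hwU (c xt) hut
      rwa [hinv xt hxt] at this
    have h2 : ‖w - c xt‖ = α * ‖c xstar - c xt‖ := by
      have : w - c xt = α • (c xstar - c xt) := by
        rw [hw]; module
      rw [this, norm_smul, Real.norm_eq_abs, abs_of_nonneg hα0]
    have h3 : ‖c xstar - c xt‖ ≤ DU := hDU _ hus _ hut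
    calc ‖xa - xt‖ ≤ (1 / μc) * ‖w - c xt‖ := h1
      _ ≤ (1 / μc) * (α * DU) := by
          rw [h2]
          have : α * ‖c xstar - c xt‖ ≤ α * DU := by
            apply mul_le_mul_of_nonneg_left h3 hα0
          exact mul_le_mul_of_nonneg_left this (by positivity)
  -- F1 xa bound via hidden convexity
  have hF1a : F1 xa ≤ (1 - α) * F1 xt + α * F1star := by
    have : F1 xa = H1 w := by
      rw [hF1 xa hxaX, hxa, hinv' w hwU]
    rw [this, hF1 xt hxt, ← hstar, hF1 xstar hxs]
    exact hH1 _ hut _ hus α ⟨hα0, hα1⟩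
  have hquad : (ρ / 2) * ‖xa - xt‖ ^ 2 ≤ ρ * α ^ 2 * DU ^ 2 / (2 * μc ^ 2) := by
    have hsq : ‖xa - xt‖ ^ 2 ≤ ((1 / μc) * (α * DU)) ^ 2 :=
      pow_le_pow_left₀ (norm_nonneg _) hdist 2
    have : (ρ / 2) * ‖xa - xt‖ ^ 2 ≤ (ρ / 2) * ((1 / μc) * (α * DU)) ^ 2 :=
      mul_le_mul_of_nonneg_left hsq (by positivity)
    calc (ρ / 2) * ‖xa - xt‖ ^ 2 ≤ (ρ / 2) * ((1 / μc) * (α * DU)) ^ 2 := this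
      _ = ρ * α ^ 2 * DU ^ 2 / (2 * μc ^ 2) := by field_simp
  have := hwc xa hxaX xt hxt
  calc F1 xt + ⟪g xt, xa - xt⟫ ≤ F1 xa + (ρ / 2) * ‖xa - xt‖ ^ 2 := this
    _ ≤ ((1 - α) * F1 xt + α * F1star) + ρ * α ^ 2 * DU ^ 2 / (2 * μc ^ 2) :=
        add_le_add hF1a hquad
    _ = ρ * α ^ 2 * DU ^ 2 / (2 * μc ^ 2) + (1 - α) * F1 xt + α * F1star := by ring
end

section
/- Let F₂ = H₂ ∘ c be hidden convex, ρ-weakly convex and differentiable, with c⁻¹ (1/μ_c)-Lipschitz, U convex of diameter D_U, and let x* ∈ X satisfy F₂(x*) ≤ 0. Then for any x⁽ᵗ⁾ ∈ X, α ∈ [0,1], and τ ≥ ρα²D_U²/(2μ_c²), the point x_α := c⁻¹((1-α)c(x⁽ᵗ⁾)+α c(x*)) satisfies ℓ_{F₂}(x_α, x⁽ᵗ⁾) ≤ (1-α)·F₂(x⁽ᵗ⁾) + τ, where ℓ_{F₂}(x,y) := F₂(y) + ⟨∇F₂(y), x-y⟩. -/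
open Set
open scoped RealInnerProductSpace

/-- bound on the linearized constraint at the hidden-convex
combination point. -/
theorem stmt8 {d : ℕ}
    (X U : Set (EuclideanSpace ℝ (Fin d)))
    (c cinv : EuclideanSpace ℝ (Fin d) → EuclideanSpace ℝ (Fin d))
    (H2 F2 : EuclideanSpace ℝ (Fin d) → ℝ)
    (g : EuclideanSpace ℝ (Fin d) → EuclideanSpace ℝ (Fin d)) -- g = ∇F₂
    (μc DU ρ τ : ℝ)
    (hμ : 0 < μc) (hρ : 0 ≤ ρ)
    (hU : U = c '' X)
    (hUconv : Convex ℝ U)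
    (hinv : ∀ x ∈ X, cinv (c x) = x)
    (hinv' : ∀ u ∈ U, c (cinv u) = u)
    (hinvmem : ∀ u ∈ U, cinv u ∈ X)
    (hLip : ∀ u ∈ U, ∀ v ∈ U, ‖cinv u - cinv v‖ ≤ (1 / μc) * ‖u - v‖)
    (hH2 : ∀ u ∈ U, ∀ v ∈ U, ∀ t ∈ Icc (0:ℝ) 1,
      H2 ((1 - t) • u + t • v) ≤ (1 - t) * H2 u + t * H2 v)
    (hF2 : ∀ x ∈ X, F2 x = H2 (c x))
    (hDU : ∀ u ∈ U, ∀ v ∈ U, ‖u - v‖ ≤ DU)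
    -- ρ-weak convexity: the linearization is a lower bound up to a quadratic
    (hwc : ∀ x ∈ X, ∀ y ∈ X, F2 y + ⟪g y, x - y⟫ ≤ F2 x + (ρ / 2) * ‖x - y‖ ^ 2)
    (xstar : EuclideanSpace ℝ (Fin d)) (hxs : xstar ∈ X)
    (hxsfeas : F2 xstar ≤ 0)
    (xt : EuclideanSpace ℝ (Fin d)) (hxt : xt ∈ X)
    (α : ℝ) (hα : α ∈ Icc (0:ℝ) 1)
    (hτ : ρ * α ^ 2 * DU ^ 2 / (2 * μc ^ 2) ≤ τ) :
    F2 xt + ⟪g xt, cinv ((1 - α) • c xt + α • c xstar) - xt⟫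
      ≤ (1 - α) * F2 xt + τ := by

  obtain ⟨hα0, hα1⟩ := hα
  have hut : c xt ∈ U := hU ▸ ⟨xt, hxt, rfl⟩
  have hus : c xstar ∈ U := hU ▸ ⟨xstar, hxs, rfl⟩
  set uα := (1 - α) • c xt + α • c xstar with huα
  have huαU : uα ∈ U := hUconv hut hus (by linarith) hα0 (by ring)
  set xα := cinv uα with hxα
  have hxαX : xα ∈ X := hinvmem _ huαU
  have h1 : F2 xt + ⟪g xt, xα - xt⟫ ≤ F2 xα + (ρ / 2) * ‖xα - xt‖ ^ 2 :=
    hwc _ hxαX _ hxt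
  have h2 : F2 xα ≤ (1 - α) * F2 xt := by
    have := hH2 (c xt) hut (c xstar) hus α ⟨hα0, hα1⟩
    rw [hF2 _ hxαX, hxα, hinv' _ huαU]
    have hFt : F2 xt = H2 (c xt) := hF2 _ hxt
    have hFs : F2 xstar = H2 (c xstar) := hF2 _ hxs
    nlinarith [this]
  have hnorm : ‖xα - xt‖ ≤ α * DU / μc := by
    have := hLip uα huαU (c xt) hut
    have hxt' : cinv (c xt) = xt := hinv _ hxt
    have hdiff : uα - c xt = α • (c xstar - c xt) := by
      rw [huα]; module
    have hn : ‖uα - c xt‖ = α * ‖c xstar - c xt‖ := by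
      rw [hdiff, norm_smul, Real.norm_eq_abs]
      simp [abs_of_nonneg hα0]
    have hD := hDU (c xstar) hus (c xt) hut
    rw [hxt', hn] at this
    have hnn : (0:ℝ) ≤ ‖c xstar - c xt‖ := norm_nonneg _
    calc ‖xα - xt‖ ≤ (1 / μc) * (α * ‖c xstar - c xt‖) := this
      _ ≤ (1 / μc) * (α * DU) := by
          apply mul_le_mul_of_nonneg_left _ (by positivity)
          exact mul_le_mul_of_nonneg_left hD hα0
      _ = α * DU / μc := by ring
  have hDU0 : (0:ℝ) ≤ DU := le_trans (norm_nonneg _) (hDU _ hut _ hut)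
  have hq : (ρ / 2) * ‖xα - xt‖ ^ 2 ≤ τ := by
    have hsq : ‖xα - xt‖ ^ 2 ≤ (α * DU / μc) ^ 2 :=
      pow_le_pow_left₀ (norm_nonneg _) hnorm 2
    have : (ρ / 2) * ‖xα - xt‖ ^ 2 ≤ (ρ / 2) * (α * DU / μc) ^ 2 :=
      mul_le_mul_of_nonneg_left hsq (by linarith)
    have heq : (ρ / 2) * (α * DU / μc) ^ 2 = ρ * α ^ 2 * DU ^ 2 / (2 * μc ^ 2) := by
      field_simp
    linarith [heq ▸ this]
  linarith
end

section
/- Suppose strong duality holds for min F₁(x) over X subject to F₂(x) ≤ 0, with optimal value F₁* and optimal Lagrange multiplier λ*, i.e. F₁(x) + λ*·max{F₂(x), 0} ≥ F₁* for all x ∈ X. If λ ≥ λ*, η_k ≤ F₁*, β ∈ (0,1), and x̄ ∈ X, then η_{k+1} := (1-β)(η_k + F₁(x̄) + λ·max{F₂(x̄),0}) - (1-2β)η_k satisfies F₁* - η_{k+1} ≤ β(F₁* - η_k) + (1-β)(λ* - λ)·max{F₂(x̄), 0}; in particular F₁* - η_{k+1} ≤ β(F₁* - η_k). -/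
/-- update of the lower-bound estimate under strong duality. -/
theorem stmt12 {d : ℕ}
    (X : Set (EuclideanSpace ℝ (Fin d)))
    (F1 F2 : EuclideanSpace ℝ (Fin d) → ℝ)
    (F1star lamstar lam β ηk : ℝ)
    (hduality : ∀ x ∈ X, F1star - lamstar * max (F2 x) 0 ≤ F1 x)
    (hlamstar : 0 ≤ lamstar) (hlam : lamstar ≤ lam)
    (hβ : β ∈ Set.Ioo (0:ℝ) 1) (hη : ηk ≤ F1star)
    (xbar : EuclideanSpace ℝ (Fin d)) (hxbar : xbar ∈ X) :
    F1star - ((1 - β) * (ηk + F1 xbar + lam * max (F2 xbar) 0) - (1 - 2 * β) * ηk)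
        ≤ β * (F1star - ηk) + (1 - β) * (lamstar - lam) * max (F2 xbar) 0 ∧
    F1star - ((1 - β) * (ηk + F1 xbar + lam * max (F2 xbar) 0) - (1 - 2 * β) * ηk)
        ≤ β * (F1star - ηk) := by
  obtain ⟨hβ0, hβ1⟩ := hβ
  have hd := hduality xbar hxbar
  have hm : (0:ℝ) ≤ max (F2 xbar) 0 := le_max_right _ _
  constructor
  · nlinarith
  · nlinarith [mul_nonneg (mul_nonneg (by linarith : (0:ℝ) ≤ 1 - β) (by linarith : (0:ℝ) ≤ lam - lamstar)) hm]
end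

section
/- Suppose nonnegative sequences (p_t) and (q_t) satisfy p_{t+1} ≤ (1-α/2)·p_t + (αλ/2)·q_t + Aα² and q_{t+1} ≤ (1-α)·q_t + Aα² for all 0 ≤ t < T, with α ∈ (0,1], λ, A ≥ 0. Then α·∑_{t=0}^{T} q_t ≤ q_0 + Aα²·T, and p_T ≤ (1-α/2)^T·p_0 + (λ/2)·q_0 + (λAα²/2)·T + 2Aα. -/
/-- coupled recursions for optimality gap and constraint
violation in the shifted bundle-level analysis. -/
theorem stmt13 (p q : ℕ → ℝ) (α lam A : ℝ) (T : ℕ)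
    (hp : ∀ t, 0 ≤ p t) (hq : ∀ t, 0 ≤ q t)
    (hα0 : 0 < α) (hα1 : α ≤ 1) (hlam : 0 ≤ lam) (hA : 0 ≤ A) (hT : 1 ≤ T)
    (hprec : ∀ t < T, p (t + 1) ≤ (1 - α / 2) * p t + (α * lam / 2) * q t + A * α ^ 2)
    (hqrec : ∀ t < T, q (t + 1) ≤ (1 - α) * q t + A * α ^ 2) :
    α * ∑ t ∈ Finset.range (T + 1), q t ≤ q 0 + A * α ^ 2 * (T : ℝ) ∧
    p T ≤ (1 - α / 2) ^ T * p 0 + (lam / 2) * q 0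
        + (lam * A * α ^ 2 / 2) * (T : ℝ) + 2 * A * α := by
  have h2 : (0:ℝ) ≤ 1 - α / 2 := by linarith
  have h3 : (1:ℝ) - α / 2 ≤ 1 := by linarith
  -- key1 : partial sums of q
  have key1 : ∀ n, n ≤ T → α * ∑ t ∈ Finset.range n, q t ≤ q 0 - q n + A * α ^ 2 * n := by
    intro n hn
    induction n with
    | zero => simp
    | succ n ih =>
      have hn' : n < T := hn
      have ih' := ih hn'.le
      have hr := hqrec n hn'
      rw [Finset.sum_range_succ]
      push_cast
      nlinarith [hq n, hq (n + 1)]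
  -- key2 : unrolled p recursion
  have key2 : ∀ n, n ≤ T → p n ≤ (1 - α / 2) ^ n * p 0
      + (α * lam / 2) * ∑ t ∈ Finset.range n, q t
      + A * α ^ 2 * ∑ k ∈ Finset.range n, (1 - α / 2) ^ k := by
    intro n hn
    induction n with
    | zero => simp
    | succ n ih =>
      have hn' : n < T := hn
      have ih' := ih hn'.le
      have hr := hprec n hn'
      have hS : (0:ℝ) ≤ ∑ t ∈ Finset.range n, q t :=
        Finset.sum_nonneg fun t _ => hq t
      have hG : (0:ℝ) ≤ ∑ k ∈ Finset.range n, (1 - α / 2) ^ k :=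
        Finset.sum_nonneg fun k _ => pow_nonneg h2 k
      have hmul := mul_le_mul_of_nonneg_left ih' h2
      rw [Finset.sum_range_succ, geom_sum_succ, pow_succ]
      have hpow : (0:ℝ) ≤ (1 - α / 2) ^ n := pow_nonneg h2 n
      nlinarith [hq n, hp 0, mul_nonneg hpow (hp 0),
        mul_nonneg (mul_nonneg hA (mul_pos hα0 hα0).le) hG,
        mul_nonneg (mul_nonneg (mul_nonneg hα0.le hlam) hα0.le) hS]
  have hS : (0:ℝ) ≤ ∑ t ∈ Finset.range T, q t := Finset.sum_nonneg fun t _ => hq t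
  have h1 := key1 T le_rfl
  constructor
  · rw [Finset.sum_range_succ]
    nlinarith [hq T, mul_nonneg (by linarith : (0:ℝ) ≤ 1 - α) (hq T)]
  · have h2' := key2 T le_rfl
    -- geometric sum bound
    have hgeq : (∑ k ∈ Finset.range T, (1 - α / 2) ^ k) * ((1 - α / 2) - 1)
        = (1 - α / 2) ^ T - 1 := geom_sum_mul _ _
    have hpowT : (0:ℝ) ≤ (1 - α / 2) ^ T := pow_nonneg h2 T
    have hGb : (∑ k ∈ Finset.range T, (1 - α / 2) ^ k) * (α / 2) ≤ 1 := by nlinarith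
    have hqb : α * ∑ t ∈ Finset.range T, q t ≤ q 0 + A * α ^ 2 * T := by
      nlinarith [hq T]
    nlinarith [mul_le_mul_of_nonneg_left hqb (by linarith : (0:ℝ) ≤ lam / 2),
      mul_le_mul_of_nonneg_left hGb (by nlinarith : (0:ℝ) ≤ 2 * A * α)]
end

section
/- Consider the problem min F₁(x) over x ∈ X subject to F₂(x) ≤ 0, where F₁ = H₁∘c and F₂ = H₂∘c are hidden convex with a common differentiable invertible transformation c whose Jacobian J_c(x̂) at a point x̂ is invertible. If x̂ ∈ X is a KKT point, i.e. F₂(x̂) ≤ 0 and there exists λ̂ ≥ 0 with 0 ∈ ∂F₁(x̂) + λ̂·∂F₂(x̂) + ∂δ_X(x̂) and λ̂·F₂(x̂) = 0, then x̂ is a global minimum of the constrained problem. -/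
open Set
open scoped RealInnerProductSpace

/-- The (Fréchet) subdifferential of `F` relative to the set `X` at `x`. -/
def fsubdiffWithin {d : ℕ} (X : Set (EuclideanSpace ℝ (Fin d)))
    (F : EuclideanSpace ℝ (Fin d) → ℝ) (x : EuclideanSpace ℝ (Fin d)) :
    Set (EuclideanSpace ℝ (Fin d)) :=
  {g | ∀ ε > (0:ℝ), ∀ᶠ y in nhds x, y ∈ X →
    F x + ⟪g, y - x⟫ - ε * ‖y - x‖ ≤ F y}

/-- The normal cone of a convex set `X` at `x` (the subdifferential of the
indicator function `δ_X` at `x ∈ X`). -/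
def normalCone {d : ℕ} (X : Set (EuclideanSpace ℝ (Fin d)))
    (x : EuclideanSpace ℝ (Fin d)) : Set (EuclideanSpace ℝ (Fin d)) :=
  {g | ∀ y ∈ X, ⟪g, y - x⟫ ≤ 0}

set_option maxHeartbeats 1000000 in
/-- under hidden convexity with a common differentiable
transformation having invertible Jacobian at `xhat`, any KKT point `xhat`
of the constrained problem is a global minimum. -/
theorem stmt18 {d : ℕ}
    (X U : Set (EuclideanSpace ℝ (Fin d)))
    (c cinv : EuclideanSpace ℝ (Fin d) → EuclideanSpace ℝ (Fin d))
    (H1 H2 F1 F2 : EuclideanSpace ℝ (Fin d) → ℝ)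
    (μc : ℝ) (hμ : 0 < μc)
    (hXclosed : IsClosed X) (hXconv : Convex ℝ X)
    (hU : U = c '' X) (hUconv : Convex ℝ U)
    (hinv : ∀ x ∈ X, cinv (c x) = x)
    (hinv' : ∀ u ∈ U, c (cinv u) = u)
    (hinvmem : ∀ u ∈ U, cinv u ∈ X)
    (hLip : ∀ u ∈ U, ∀ v ∈ U, ‖cinv u - cinv v‖ ≤ (1 / μc) * ‖u - v‖)
    (hH1 : ConvexOn ℝ U H1) (hH2 : ConvexOn ℝ U H2)
    (hF1 : ∀ x ∈ X, F1 x = H1 (c x)) (hF2 : ∀ x ∈ X, F2 x = H2 (c x))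
    (xhat : EuclideanSpace ℝ (Fin d)) (hxhat : xhat ∈ X)
    (J : EuclideanSpace ℝ (Fin d) ≃L[ℝ] EuclideanSpace ℝ (Fin d))
    (hJ : HasFDerivAt c
      (J : EuclideanSpace ℝ (Fin d) →L[ℝ] EuclideanSpace ℝ (Fin d)) xhat)
    -- KKT conditions at xhat
    (hfeas : F2 xhat ≤ 0)
    (lam : ℝ) (hlam : 0 ≤ lam) (hcomp : lam * F2 xhat = 0)
    (g1 g2 g3 : EuclideanSpace ℝ (Fin d))
    (hg1 : g1 ∈ fsubdiffWithin X F1 xhat)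
    (hg2 : g2 ∈ fsubdiffWithin X F2 xhat)
    (hg3 : g3 ∈ normalCone X xhat)
    (hsum : g1 + lam • g2 + g3 = 0) :
    ∀ x ∈ X, F2 x ≤ 0 → F1 xhat ≤ F1 x := by
  intro x hx hx2
  have hxhatU : c xhat ∈ U := hU ▸ Set.mem_image_of_mem c hxhat
  have hxU : c x ∈ U := hU ▸ Set.mem_image_of_mem c hx
  have key : F1 xhat + lam * F2 xhat ≤ F1 x + lam * F2 x := by
    refine le_of_forall_pos_le_add (fun ε hε => ?_)
    set D : ℝ := ‖c x - c xhat‖ with hD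
    have hD0 : 0 ≤ D := norm_nonneg _
    set K : ℝ := (1 + lam) * ((1/μc) * D) + 1 with hK
    have hKpos : 0 < K := by positivity
    have hε0 : 0 < ε / K := div_pos hε hKpos
    obtain ⟨δ1, hδ1, h1⟩ := Metric.eventually_nhds_iff.mp (hg1 (ε/K) hε0)
    obtain ⟨δ2, hδ2, h2⟩ := Metric.eventually_nhds_iff.mp (hg2 (ε/K) hε0)
    set δ := min δ1 δ2 with hδdef
    have hδ : 0 < δ := lt_min hδ1 hδ2
    set t : ℝ := min 1 (δ * μc / (2 * (D + 1))) with ht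
    have ht0 : 0 < t := lt_min one_pos (by positivity)
    have ht1 : t ≤ 1 := min_le_left _ _
    set ut := c xhat + t • (c x - c xhat) with hut
    have hutU : ut ∈ U := by
      have h := hUconv hxhatU hxU (by linarith : (0:ℝ) ≤ 1 - t) ht0.le (by ring)
      have : (1 - t) • c xhat + t • c x = ut := by rw [hut]; module
      rwa [this] at h
    set y := cinv ut with hy
    have hyX : y ∈ X := hinvmem ut hutU
    have hcy : c y = ut := hinv' ut hutU
    have hdist : ‖y - xhat‖ ≤ (1/μc) * (t * D) := by
      have h := hLip ut hutU (c xhat) hxhatU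
      rw [hinv xhat hxhat] at h
      have hnorm : ‖ut - c xhat‖ = t * D := by
        rw [hut]
        have : c xhat + t • (c x - c xhat) - c xhat = t • (c x - c xhat) := by module
        rw [this, norm_smul, Real.norm_eq_abs, abs_of_pos ht0, hD]
      calc ‖y - xhat‖ ≤ (1/μc) * ‖ut - c xhat‖ := h
        _ = (1/μc) * (t * D) := by rw [hnorm]
    have hdistδ : dist y xhat < δ := by
      rw [dist_eq_norm]
      have htle : t ≤ δ * μc / (2 * (D + 1)) := min_le_right _ _
      have hlt : (1/μc) * (t * D) < δ := by
        rw [div_mul_eq_mul_div, one_mul, div_lt_iff₀ hμ]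
        calc t * D ≤ (δ * μc / (2 * (D + 1))) * D :=
              mul_le_mul_of_nonneg_right htle hD0
          _ < δ * μc := by
              rw [div_mul_eq_mul_div, div_lt_iff₀ (by positivity)]
              nlinarith [mul_nonneg (mul_pos hδ hμ).le hD0, mul_pos hδ hμ]
      linarith
    have Hineq1 := h1 (lt_of_lt_of_le hdistδ (min_le_left _ _)) hyX
    have Hineq2 := h2 (lt_of_lt_of_le hdistδ (min_le_right _ _)) hyX
    -- normal cone: ⟪g1 + lam • g2, y - xhat⟫ ≥ 0
    have hn : (0:ℝ) ≤ ⟪g1, y - xhat⟫ + lam * ⟪g2, y - xhat⟫ := by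
      have hg := hg3 y hyX
      have heq : g3 = -(g1 + lam • g2) := by
        have := hsum
        rw [← neg_eq_iff_eq_neg]
        linear_combination (norm := module) -this
      rw [heq, inner_neg_left, inner_add_left, real_inner_smul_left] at hg
      linarith
    -- convexity along the segment
    have hc1 : H1 ut ≤ (1 - t) * H1 (c xhat) + t * H1 (c x) := by
      have h := hH1.2 hxhatU hxU (by linarith : (0:ℝ) ≤ 1 - t) ht0.le (by ring)
      have heq : (1 - t) • c xhat + t • c x = ut := by rw [hut]; module
      rw [heq] at h
      simpa using h
    have hc2 : H2 ut ≤ (1 - t) * H2 (c xhat) + t * H2 (c x) := by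
      have h := hH2.2 hxhatU hxU (by linarith : (0:ℝ) ≤ 1 - t) ht0.le (by ring)
      have heq : (1 - t) • c xhat + t • c x = ut := by rw [hut]; module
      rw [heq] at h
      simpa using h
    -- rewrite F's
    rw [hF1 y hyX, hcy] at Hineq1
    rw [hF2 y hyX, hcy] at Hineq2
    rw [hF1 xhat hxhat] at Hineq1 ⊢
    rw [hF2 xhat hxhat] at Hineq2 ⊢
    rw [hF1 x hx, hF2 x hx]
    -- combine
    set A := ‖y - xhat‖ with hA
    have hA0 : 0 ≤ A := norm_nonneg _
    have hεK : (ε/K) * K = ε := div_mul_cancel₀ ε (ne_of_gt hKpos)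
    -- L(xhat) - (1+lam)*(ε/K)*A ≤ L(ut stuff) ≤ (1-t)L(xhat) + t L(x)
    have P1 := mul_le_mul_of_nonneg_left Hineq2 hlam
    have P2 := mul_le_mul_of_nonneg_left hc2 hlam
    have step : t * ((H1 (c xhat) + lam * H2 (c xhat)) - (H1 (c x) + lam * H2 (c x)))
        ≤ (1 + lam) * (ε/K) * A := by nlinarith [P1, P2, hn, Hineq1, hc1]
    have hAbound : (1 + lam) * (ε/K) * A ≤ t * ((ε/K) * (K - 1)) := by
      have : (1 + lam) * (ε/K) * A ≤ (1 + lam) * (ε/K) * ((1/μc) * (t * D)) := by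
        apply mul_le_mul_of_nonneg_left hdist (by positivity)
      calc (1 + lam) * (ε/K) * A ≤ (1 + lam) * (ε/K) * ((1/μc) * (t * D)) := this
        _ = t * ((ε/K) * ((1 + lam) * ((1/μc) * D))) := by ring
        _ = t * ((ε/K) * (K - 1)) := by rw [hK]; ring
    have hfinal : (H1 (c xhat) + lam * H2 (c xhat)) - (H1 (c x) + lam * H2 (c x))
        ≤ (ε/K) * (K - 1) := by
      have := le_trans step hAbound
      exact le_of_mul_le_mul_left (by linarith [this]) ht0
    have : (ε/K) * (K - 1) ≤ ε := by nlinarith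
    linarith
  have h2x : lam * F2 x ≤ 0 := mul_nonpos_of_nonneg_of_nonpos hlam hx2
  linarith
end

section
/- Let x_α := c⁻¹((1-α)c(x⁽ᵏ⁾) + α c(x*)) with hidden convex F₁ = H₁∘c, c⁻¹ (1/μ_c)-Lipschitz, U convex with diameter D_U, and x* a constrained minimizer with value F₁*. If x⁽ᵏ⁺¹⁾ ∈ X satisfies φ₁(x⁽ᵏ⁺¹⁾) ≤ φ₁(x_α) + ε_in where φ₁(x) := F₁(x) + (ρ̂/2)‖x - x⁽ᵏ⁾‖², then F₁(x⁽ᵏ⁺¹⁾) - F₁* ≤ (1-α)(F₁(x⁽ᵏ⁾) - F₁*) + ρ̂·D_U²·α²/(2μ_c²) + ε_in. -/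
open Set

/-- one-step improvement of inexact PPM under hidden convexity. -/
theorem stmt19 {d : ℕ}
    (X U : Set (EuclideanSpace ℝ (Fin d)))
    (c cinv : EuclideanSpace ℝ (Fin d) → EuclideanSpace ℝ (Fin d))
    (H1 F1 F2 : EuclideanSpace ℝ (Fin d) → ℝ)
    (μc DU ρh εin α F1star : ℝ)
    (hμ : 0 < μc) (hρ : 0 < ρh) (hεin : 0 ≤ εin) (hα : α ∈ Icc (0:ℝ) 1)
    (hU : U = c '' X)
    (hUconv : Convex ℝ U)
    (hinv : ∀ x ∈ X, cinv (c x) = x)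
    (hinv' : ∀ u ∈ U, c (cinv u) = u)
    (hinvmem : ∀ u ∈ U, cinv u ∈ X)
    (hLip : ∀ u ∈ U, ∀ v ∈ U, ‖cinv u - cinv v‖ ≤ (1 / μc) * ‖u - v‖)
    (hH1 : ∀ u ∈ U, ∀ v ∈ U, ∀ t ∈ Icc (0:ℝ) 1,
      H1 ((1 - t) • u + t • v) ≤ (1 - t) * H1 u + t * H1 v)
    (hF1 : ∀ x ∈ X, F1 x = H1 (c x))
    (hDU : ∀ u ∈ U, ∀ v ∈ U, ‖u - v‖ ≤ DU)
    (xstar : EuclideanSpace ℝ (Fin d)) (hxs : xstar ∈ X)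
    (hxsfeas : F2 xstar ≤ 0)
    (hmin : ∀ x ∈ X, F2 x ≤ 0 → F1 xstar ≤ F1 x)
    (hstar : F1 xstar = F1star)
    (xk xk1 : EuclideanSpace ℝ (Fin d)) (hxk : xk ∈ X) (hxk1 : xk1 ∈ X)
    -- the inner solver returns xk1 with φ₁(xk1) ≤ φ₁(x_α) + ε_in
    (hsolve : F1 xk1 + (ρh / 2) * ‖xk1 - xk‖ ^ 2
        ≤ F1 (cinv ((1 - α) • c xk + α • c xstar))
          + (ρh / 2) * ‖cinv ((1 - α) • c xk + α • c xstar) - xk‖ ^ 2 + εin) :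
    F1 xk1 - F1star
      ≤ (1 - α) * (F1 xk - F1star) + ρh * DU ^ 2 * α ^ 2 / (2 * μc ^ 2) + εin := by

  obtain ⟨hα0, hα1⟩ := hα
  have huk : c xk ∈ U := hU ▸ ⟨xk, hxk, rfl⟩
  have hus : c xstar ∈ U := hU ▸ ⟨xstar, hxs, rfl⟩
  set uα : EuclideanSpace ℝ (Fin d) := (1 - α) • c xk + α • c xstar with huα
  have huαU : uα ∈ U := hUconv huk hus (by linarith) hα0 (by ring)
  set xα := cinv uα with hxα
  have hxαX : xα ∈ X := hinvmem _ huαU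
  -- convexity bound
  have hconv : F1 xα ≤ (1 - α) * F1 xk + α * F1star := by
    have h := hH1 (c xk) huk (c xstar) hus α ⟨hα0, hα1⟩
    rw [hF1 _ hxαX, hinv' _ huαU, hF1 _ hxk, ← hstar, hF1 _ hxs]
    exact h
  -- distance bound
  have hdist : ‖xα - xk‖ ≤ (1 / μc) * (α * DU) := by
    have h1 : ‖xα - xk‖ ≤ (1 / μc) * ‖uα - c xk‖ := by
      have := hLip uα huαU (c xk) huk
      rwa [hinv _ hxk] at this
    have h2 : uα - c xk = α • (c xstar - c xk) := by
      rw [huα]; module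
    have h3 : ‖uα - c xk‖ = α * ‖c xstar - c xk‖ := by
      rw [h2, norm_smul, Real.norm_eq_abs, abs_of_nonneg hα0]
    have h4 : ‖c xstar - c xk‖ ≤ DU := hDU _ hus _ huk
    have h5 : α * ‖c xstar - c xk‖ ≤ α * DU := by
      exact mul_le_mul_of_nonneg_left h4 hα0
    calc ‖xα - xk‖ ≤ (1 / μc) * ‖uα - c xk‖ := h1
      _ ≤ (1 / μc) * (α * DU) := by
          rw [h3]; exact mul_le_mul_of_nonneg_left h5 (by positivity)
  have hsq : ‖xα - xk‖ ^ 2 ≤ ((1 / μc) * (α * DU)) ^ 2 := by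
    have := norm_nonneg (xα - xk)
    nlinarith
  have hnn : 0 ≤ ‖xk1 - xk‖ ^ 2 := by positivity
  have key : (ρh / 2) * ‖xα - xk‖ ^ 2 ≤ ρh * DU ^ 2 * α ^ 2 / (2 * μc ^ 2) := by
    have h : ((1 / μc) * (α * DU)) ^ 2 = DU ^ 2 * α ^ 2 / μc ^ 2 := by
      field_simp
    calc (ρh / 2) * ‖xα - xk‖ ^ 2 ≤ (ρh / 2) * ((1 / μc) * (α * DU)) ^ 2 :=
          mul_le_mul_of_nonneg_left hsq (by positivity)
      _ = ρh * DU ^ 2 * α ^ 2 / (2 * μc ^ 2) := by rw [h]; field_simp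
  have := hsolve
  nlinarith [hconv, key, hnn, mul_nonneg (le_of_lt hρ) hnn]
end
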